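/- Every history H_to generated by the MVTO algorithm is opaque. -/
import Mathlib


/- A framework for software transactional memory histories, following
   the paper "multiversion timestamp ordering STM".  Transactions,
   objects and values are modelled as natural numbers; transaction
   identifiers coincide with their timestamps.  Values written by the
   transactions are assumed unique, so the reads-from relation is
   determined by the events themselves. -/

/-- Transactional events. -/
inductive Event where
  | read   (t x v : ℕ) : Event
  | write  (t x v : ℕ) : Event
  | commit (t : ℕ) : Event
  | abort  (t : ℕ) : Event
deriving DecidableEq

/-- The transaction issuing an event. -/
def Event.txn : Event → ℕ
  | .read t _ _ => t
  | .write t _ _ => t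
  | .commit t => t
  | .abort t => t

/-- A (sequential) history is a finite sequence of events. -/
abbrev History := List Event

/-- `e` occurs strictly before `f` in `H`. -/
def before (H : History) (e f : Event) : Prop :=
  ∃ i j : ℕ, i < j ∧ H[i]? = some e ∧ H[j]? = some f

def committed (H : History) (t : ℕ) : Prop := Event.commit t ∈ H
def abortedTxn (H : History) (t : ℕ) : Prop := Event.abort t ∈ H
def started (H : History) (t : ℕ) : Prop := ∃ e ∈ H, e.txn = t
def terminated (H : History) (t : ℕ) : Prop := committed H t ∨ abortedTxn H t
def live (H : History) (t : ℕ) : Prop := started H t ∧ ¬ terminated H t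
def writesTo (H : History) (t x : ℕ) : Prop := ∃ v, Event.write t x v ∈ H
def readOnly (H : History) (t : ℕ) : Prop := ∀ x v, Event.write t x v ∉ H

/-- `T_k` reads `x` (with value `v`) from the committed transaction `T_j`.
    Since written values are unique, this is determined by the events. -/
def readsFrom (H : History) (j k x v : ℕ) : Prop :=
  Event.read k x v ∈ H ∧ Event.write j x v ∈ H ∧ committed H j

/-- A version order assigns, for every object `x`, an order on the
    versions `x_i` created by committed transactions:
    `VO x i j` means `x_i ≪ x_j`. -/
abbrev VersionOrder := ℕ → ℕ → ℕ → Prop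

/-- `VO` is a (nonreflexive, transitive, total) order on the versions of each
    object created by committed transactions of `H`. -/
def IsVersionOrder (H : History) (VO : VersionOrder) : Prop :=
  (∀ x i j, VO x i j → committed H i ∧ committed H j ∧
      writesTo H i x ∧ writesTo H j x ∧ i ≠ j) ∧
  (∀ x i, ¬ VO x i i) ∧
  (∀ x i j k, VO x i j → VO x j k → VO x i k) ∧
  (∀ x i j, committed H i → committed H j → writesTo H i x → writesTo H j x →
      i ≠ j → VO x i j ∨ VO x j i)

/-- Real-time edge: `T_i` commits before `T_j` starts (all of `T_j`'s events). -/
def rtEdge (H : History) (i j : ℕ) : Prop :=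
  committed H i ∧ started H j ∧
    ∀ e ∈ H, e.txn = j → before H (Event.commit i) e

/-- Reads-from edge: `T_j` reads some object from `T_i`. -/
def rfEdge (H : History) (i j : ℕ) : Prop := ∃ x v, readsFrom H i j x v

/-- Multiversion edges, relative to a version order:
    for each successful read `r_k(x,v)` reading the version created by the
    committed transaction `T_j`, and each (distinct) committed transaction `T_i`
    writing a different value `u` to `x`: an edge `T_i → T_j` if `x_i ≪ x_j`,
    and an edge `T_k → T_i` if `x_j ≪ x_i`. -/
def mvEdge (H : History) (VO : VersionOrder) (a b : ℕ) : Prop :=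
  ∃ x v u j k i, readsFrom H j k x v ∧
    committed H i ∧ Event.write i x u ∈ H ∧ u ≠ v ∧ i ≠ j ∧ i ≠ k ∧
    ((VO x i j ∧ a = i ∧ b = j) ∨ (VO x j i ∧ a = k ∧ b = i))

/-- Edges of the opacity graph `OPG(H, VO)`, with the real-time edges taken
    with respect to the history `Hrt`. -/
def opgEdgeRT (Hrt H : History) (VO : VersionOrder) (a b : ℕ) : Prop :=
  rtEdge Hrt a b ∨ rfEdge H a b ∨ mvEdge H VO a b

/-- Edges of the opacity graph `OPG(H, VO)`. -/
def opgEdge (H : History) (VO : VersionOrder) : ℕ → ℕ → Prop :=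
  opgEdgeRT H H VO

/-- A directed graph (edge relation) on transactions is acyclic. -/
def Acyclic (E : ℕ → ℕ → Prop) : Prop := ∀ t, ¬ Relation.TransGen E t t

/-- `H` is t-sequential: no event of another transaction occurs between two
    events of the same transaction. -/
def tSequential (H : History) : Prop :=
  ∀ e f g, e ∈ H → f ∈ H → g ∈ H → e.txn = g.txn → e.txn ≠ f.txn →
    ¬ (before H e f ∧ before H f g)

/-- `H` is legal: every successful read returns the value written by the
    last committed transaction writing `x` before it. -/
def legal (H : History) : Prop :=
  ∀ k x v, Event.read k x v ∈ H →
    ∃ j, Event.write j x v ∈ H ∧ committed H j ∧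
      before H (Event.commit j) (Event.read k x v) ∧
      ∀ i u, Event.write i x u ∈ H → committed H i →
        before H (Event.commit i) (Event.read k x v) →
        i = j ∨ before H (Event.commit i) (Event.commit j)

/-- `H` is valid: every successful read is preceded by the commit of a
    transaction writing that value to that object. -/
def validH (H : History) : Prop :=
  ∀ k x v, Event.read k x v ∈ H →
    ∃ j, Event.write j x v ∈ H ∧ before H (Event.commit j) (Event.read k x v)

/-- Two histories are equivalent if they have the same set of events. -/
def equivalentH (H H' : History) : Prop := ∀ e, e ∈ H ↔ e ∈ H'

/-- `Hb` is the completion of `H`: it extends `H` with abort events for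
    precisely the incomplete (live) transactions of `H`. -/
def isCompletion (H Hb : History) : Prop :=
  ∃ L : List ℕ, Hb = H ++ L.map Event.abort ∧ L.Nodup ∧
    (∀ t, t ∈ L ↔ live H t)

/-- `S` respects the (transaction-level) real-time order of `H`. -/
def respectsRT (H S : History) : Prop := ∀ i j, rtEdge H i j → rtEdge S i j

/-- Opacity: there is a legal t-sequential history equivalent to the
    completion of `H` that respects the real-time order of `H`. -/
def isOpaque (H : History) : Prop :=
  ∃ Hb S, isCompletion H Hb ∧ tSequential S ∧ legal S ∧
    equivalentH S Hb ∧ respectsRT H S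

/-- The version order `≪_S` induced by a t-sequential history `S`:
    `x_i ≪_S x_j` iff the committed writers `T_i`, `T_j` of `x`
    satisfy `T_i <_S T_j`. -/
def seqVO (S : History) : VersionOrder := fun x i j =>
  committed S i ∧ committed S j ∧ writesTo S i x ∧ writesTo S j x ∧ i ≠ j ∧
    before S (Event.commit i) (Event.commit j)

/-- The timestamp version order `≪_to`: versions are ordered by the
    timestamps of the committed transactions that created them. -/
def tsVO (H : History) : VersionOrder := fun x i j =>
  committed H i ∧ committed H j ∧ writesTo H i x ∧ writesTo H j x ∧ i < j

/-- `T_j` is the committed writer of `x` with the largest timestamp smaller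
    than `l`. -/
def isLargestWriterBelow (H : History) (x l j : ℕ) : Prop :=
  committed H j ∧ writesTo H j x ∧ j < l ∧
    ∀ m, committed H m → writesTo H m x → m < l → m ≤ j

/-- `T_k` is the committed writer of `x` with the smallest timestamp greater
    than `l`. -/
def isSmallestWriterAbove (H : History) (x l k : ℕ) : Prop :=
  committed H k ∧ writesTo H k x ∧ l < k ∧
    ∀ m, committed H m → writesTo H m x → l < m → k ≤ m

/-- Rank of an event: transactions ordered by timestamp, with the
    terminating event (commit/abort) last within each transaction. -/
def erank : Event → ℕ
  | .read t _ _ => 2 * t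
  | .write t _ _ => 2 * t
  | .commit t => 2 * t + 1
  | .abort t => 2 * t + 1

lemma txn_le_of_erank_le {e f : Event} (h : erank e ≤ erank f) : e.txn ≤ f.txn := by
  cases e <;> cases f <;> simp [erank, Event.txn] at * <;> omega

lemma erank_lt_of_txn_lt {e f : Event} (h : e.txn < f.txn) : erank e < erank f := by
  cases e <;> cases f <;> simp [erank, Event.txn] at * <;> omega

lemma mem_of_before_left {S : History} {e f : Event} (h : before S e f) : e ∈ S := by
  obtain ⟨i, j, _, hi, _⟩ := h
  obtain ⟨hlt, rfl⟩ := List.getElem?_eq_some_iff.mp hi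
  exact List.getElem_mem hlt

lemma mem_of_before_right {S : History} {e f : Event} (h : before S e f) : f ∈ S := by
  obtain ⟨i, j, _, _, hj⟩ := h
  obtain ⟨hlt, rfl⟩ := List.getElem?_eq_some_iff.mp hj
  exact List.getElem_mem hlt

lemma erank_le_of_before {S : History}
    (hs : S.Pairwise (fun a b => erank a ≤ erank b)) {e f : Event}
    (h : before S e f) : erank e ≤ erank f := by
  obtain ⟨i, j, hij, hi, hj⟩ := h
  obtain ⟨hlt1, h1⟩ := List.getElem?_eq_some_iff.mp hi
  obtain ⟨hlt2, h2⟩ := List.getElem?_eq_some_iff.mp hj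
  have := (List.pairwise_iff_getElem.mp hs) i j hlt1 hlt2 hij
  rw [h1, h2] at this
  exact this

lemma before_of_erank_lt {S : History}
    (hs : S.Pairwise (fun a b => erank a ≤ erank b)) {e f : Event}
    (he : e ∈ S) (hf : f ∈ S) (h : erank e < erank f) : before S e f := by
  obtain ⟨i, hlt1, h1⟩ := List.getElem_of_mem he
  obtain ⟨j, hlt2, h2⟩ := List.getElem_of_mem hf
  rcases lt_trichotomy i j with hij | hij | hij
  · exact ⟨i, j, hij, by simp [h1, hlt1], by simp [h2, hlt2]⟩
  · subst hij; rw [h1] at h2; subst h2; omega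
  · have := (List.pairwise_iff_getElem.mp hs) j i hlt2 hlt1 hij
    rw [h1, h2] at this; omega

/-- every history generated by the MVTO algorithm is opaque.
    The guarantees of the algorithm (validity, timestamps increasing with
    real-time order, the read rule and the write rule) are hypotheses. -/
theorem mvto_opaque (H : History) (hval : validH H)
    (hrt : ∀ i j, rtEdge H i j → i < j)
    (hrf : ∀ j k x v, readsFrom H j k x v → j < k)
    (hwrite : ∀ j k x v i, readsFrom H j k x v → committed H i →
      writesTo H i x → i ≠ j → i ≠ k → i < j ∨ k < i) :
    isOpaque H := by
  classical
  -- the completion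
  set L : List ℕ := ((H.map Event.txn).dedup).filter
      (fun t => decide (live H t)) with hL
  set Hb : History := H ++ L.map Event.abort with hHb
  have hmemL : ∀ t, t ∈ L ↔ live H t := by
    intro t
    simp only [hL, List.mem_filter, List.mem_dedup, List.mem_map, decide_eq_true_eq]
    constructor
    · rintro ⟨_, h⟩; exact h
    · intro h
      refine ⟨?_, h⟩
      obtain ⟨⟨e, he, het⟩, _⟩ := h
      exact ⟨e, he, het⟩
  have hcomp : isCompletion H Hb := ⟨L, rfl, (List.nodup_dedup _).filter _, hmemL⟩
  -- events of Hb that are not aborts are in H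
  have hHbH : ∀ e : Event, e ∈ Hb → (∀ t, e ≠ Event.abort t) → e ∈ H := by
    intro e he hne
    rcases List.mem_append.mp he with h | h
    · exact h
    · obtain ⟨t, _, rfl⟩ := List.mem_map.mp h
      exact absurd rfl (hne t)
  have hHHb : ∀ e : Event, e ∈ H → e ∈ Hb := fun e he => List.mem_append.mpr (Or.inl he)
  -- the sequential history
  set S : History := Hb.mergeSort (fun a b => decide (erank a ≤ erank b)) with hS
  have hperm : S.Perm Hb := List.mergeSort_perm Hb _
  have hmemS : ∀ e : Event, e ∈ S ↔ e ∈ Hb := fun e => hperm.mem_iff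
  have hsorted : S.Pairwise (fun a b => erank a ≤ erank b) := by
    have := List.pairwise_mergeSort (le := fun a b : Event => decide (erank a ≤ erank b))
      (fun a b c hab hbc => by
        simp only [decide_eq_true_eq] at *; omega)
      (fun a b => by
        simp only [Bool.or_eq_true, decide_eq_true_eq]; omega) Hb
    rw [← hS] at this
    exact this.imp (fun h => by simpa using h)
  -- membership transfers
  have hSH : ∀ e : Event, e ∈ S → (∀ t, e ≠ Event.abort t) → e ∈ H := by
    intro e he hne; exact hHbH e ((hmemS e).mp he) hne
  have hHS : ∀ e : Event, e ∈ H → e ∈ S := fun e he => (hmemS e).mpr (hHHb e he)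
  refine ⟨Hb, S, hcomp, ?_, ?_, fun e => (hmemS e), ?_⟩
  -- t-sequential
  · intro e f g he hf hg heg hef ⟨h1, h2⟩
    have l1 := txn_le_of_erank_le (erank_le_of_before hsorted h1)
    have l2 := txn_le_of_erank_le (erank_le_of_before hsorted h2)
    have : e.txn = f.txn := le_antisymm l1 (heg ▸ l2)
    exact hef this
  -- legal
  · intro k x v hread
    have hreadH : Event.read k x v ∈ H := hSH _ hread (by intro t h; cases h)
    obtain ⟨j, hw, hb⟩ := hval k x v hreadH
    have hcj : committed H j := mem_of_before_left hb
    have hrfj : readsFrom H j k x v := ⟨hreadH, hw, hcj⟩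
    have hjk : j < k := hrf j k x v hrfj
    refine ⟨j, hHS _ hw, hHS _ hcj, ?_, ?_⟩
    · exact before_of_erank_lt hsorted (hHS _ hcj) hread
        (by simp only [erank]; omega)
    · intro i u hwi hci hbi
      have hwiH : Event.write i x u ∈ H := hSH _ hwi (by intro t h; cases h)
      have hciH : committed H i := hSH _ hci (by intro t h; cases h)
      have hik : i < k := by
        have := erank_le_of_before hsorted hbi
        simp only [erank] at this; omega
      by_cases hij : i = j
      · exact Or.inl hij
      · have := hwrite j k x v i hrfj hciH ⟨u, hwiH⟩ hij (by omega)
        have hijlt : i < j := by omega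
        exact Or.inr (before_of_erank_lt hsorted (hHS _ hciH) (hHS _ hcj)
          (by simp only [erank]; omega))
  -- respects real-time order
  · intro i j hedge
    have hij : i < j := hrt i j hedge
    obtain ⟨hci, hsj, _⟩ := hedge
    have hciS : Event.commit i ∈ S := hHS _ hci
    refine ⟨hciS, ?_, ?_⟩
    · obtain ⟨e, he, het⟩ := hsj
      exact ⟨e, hHS _ he, het⟩
    · intro e he het
      refine before_of_erank_lt hsorted hciS he ?_
      refine erank_lt_of_txn_lt ?_
      show (Event.commit i).txn < e.txn
      rw [het]; exact hij
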